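/- arXiv:2601.10511 — 5 statements merged into one kernel-verified Lean document; each statement's English description precedes it below -/
import Mathlib

section
/- Let ε, δ ∈ (0,1) and let T be the least positive integer satisfying (e^{ε/(1+ε)}/(1+ε))^T + (e^{-ε/(1-ε)}/(1-ε))^T ≤ δ. Then log(2/δ)/(log(1-ε) + ε/(1-ε)) ≤ T ≤ log(2/δ)/(log(1+ε) - ε/(1+ε)). -/
/-!
The bases are `exp (-A)` and `exp (-B)` with `A = log (1 + ε) - ε / (1 + ε)` and
`B = log (1 - ε) + ε / (1 - ε)`. Comparing `log x` with `sinh (log x) = (x - x⁻¹) / 2`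
(larger for `x ≥ 1`, smaller for `x ≤ 1`) gives `0 < A ≤ ε² / 2` and `B ≥ ε² / (2 (1 - ε))`.
As `A ≤ B`, the sum at `T` is at least `2 exp (-T B)`, which is the lower bound.
For the upper bound, `T - 1` fails the threshold:
`δ < exp (-(T - 1) A) (1 + exp (-(T - 1) (B - A)))`. Either `T A ≤ log 2 ≤ log (2 / δ)`, or
`(T - 1) A ≥ log 2 - A` and the gap `B - A ≥ ε³ / (2 (1 - ε))` makes the last factor at most
`2 exp (-A)`, so that `δ < 2 exp (-T A)`.
-/

open Real

noncomputable def slowRate (ε : ℝ) : ℝ := log (1 + ε) - ε / (1 + ε)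

noncomputable def fastRate (ε : ℝ) : ℝ := log (1 - ε) + ε / (1 - ε)

lemma log_le_sub_inv_div_two {x : ℝ} (hx : 1 ≤ x) : log x ≤ (x - x⁻¹) / 2 := by
  rw [← sinh_log (by linarith)]
  exact self_le_sinh_iff.2 (log_nonneg hx)

lemma sub_inv_div_two_le_log {x : ℝ} (hx0 : 0 < x) (hx1 : x ≤ 1) : (x - x⁻¹) / 2 ≤ log x := by
  rw [← sinh_log hx0]
  exact sinh_le_self_iff.2 (log_nonpos hx0.le hx1)

lemma slowRate_pos {ε : ℝ} (hε : 0 < ε) : 0 < slowRate ε := by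
  have h := lt_log_one_add_of_pos hε
  have : ε / (1 + ε) ≤ 2 * ε / (ε + 2) := by
    rw [div_le_div_iff₀ (by positivity) (by positivity)]
    nlinarith
  unfold slowRate
  linarith

lemma slowRate_le {ε : ℝ} (hε : 0 ≤ ε) : slowRate ε ≤ ε ^ 2 / 2 := by
  have h := log_le_sub_inv_div_two (by linarith : 1 ≤ 1 + ε)
  have : (1 + ε - (1 + ε)⁻¹) / 2 - ε / (1 + ε) = ε ^ 2 / (2 * (1 + ε)) := by
    field_simp
    ring
  have : ε ^ 2 / (2 * (1 + ε)) ≤ ε ^ 2 / 2 := by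
    gcongr
    linarith
  unfold slowRate
  linarith

lemma le_fastRate {ε : ℝ} (hε0 : 0 ≤ ε) (hε1 : ε < 1) :
    ε ^ 2 / (2 * (1 - ε)) ≤ fastRate ε := by
  have h := sub_inv_div_two_le_log (by linarith : 0 < 1 - ε) (by linarith)
  have : (1 - ε - (1 - ε)⁻¹) / 2 + ε / (1 - ε) = ε ^ 2 / (2 * (1 - ε)) := by
    have : 1 - ε ≠ 0 := by linarith
    field_simp
    ring
  unfold fastRate
  linarith

lemma exp_div_one_add_eq {ε : ℝ} (hε : -1 < ε) :
    exp (ε / (1 + ε)) / (1 + ε) = exp (-slowRate ε) := by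
  rw [slowRate, neg_sub, exp_sub, exp_log (by linarith)]

lemma exp_neg_div_one_sub_eq {ε : ℝ} (hε : ε < 1) :
    exp (-ε / (1 - ε)) / (1 - ε) = exp (-fastRate ε) := by
  rw [fastRate, show -(log (1 - ε) + ε / (1 - ε)) = -ε / (1 - ε) - log (1 - ε) by ring, exp_sub,
    exp_log (by linarith)]

lemma log_two_div_le_mul_of_exp_add_exp_le {A B δ : ℝ} {n : ℕ} (hAB : A ≤ B)
    (h : exp (-A) ^ n + exp (-B) ^ n ≤ δ) : log (2 / δ) ≤ n * B := by
  have hBA : exp (-B) ^ n ≤ exp (-A) ^ n := by gcongr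
  have hδ : 0 < δ := lt_of_lt_of_le (by positivity) h
  have h2 : log (2 * exp (-B) ^ n) ≤ log δ := log_le_log (by positivity) (by linarith)
  rw [← exp_nat_mul, log_mul two_ne_zero (exp_pos _).ne', log_exp] at h2
  rw [log_div two_ne_zero hδ.ne']
  linarith

/-- Once `m A ≥ log 2 - A`, `hgap` gives `exp (-m (B - A)) ≤ 1 - 2 A ≤ 2 exp (-A) - 1`. -/
lemma mul_le_log_two_div_of_lt_exp_add_exp {A B δ : ℝ} {m : ℕ} (hA : 0 < A) (hA2 : 2 * A < 1)
    (hAB : A ≤ B) (hgap : -log (1 - 2 * A) ≤ (log 2 - A) * (B - A) / A)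
    (hδ0 : 0 < δ) (hδ1 : δ ≤ 1) (h : δ < exp (-A) ^ m + exp (-B) ^ m) :
    (m + 1) * A ≤ log (2 / δ) := by
  have hlog2 : log 2 ≤ log (2 / δ) :=
    log_le_log two_pos (le_div_self zero_le_two hδ0 hδ1)
  by_cases hsmall : (m + 1) * A ≤ log 2
  · exact hsmall.trans hlog2
  rw [not_le] at hsmall
  have hm : -log (1 - 2 * A) ≤ m * (B - A) := by
    refine hgap.trans ?_
    rw [mul_div_right_comm]
    gcongr
    rw [div_le_iff₀ hA]
    linarith
  have hgapExp : 1 + exp (-(m * (B - A))) ≤ 2 * exp (-A) := by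
    have h1 : exp (-(m * (B - A))) ≤ 1 - 2 * A := by
      rw [← exp_log (by linarith : 0 < 1 - 2 * A)]
      gcongr
      linarith
    linarith [add_one_le_exp (-A)]
  have hδlt : δ < 2 * exp (-((m + 1) * A)) := calc
    δ < exp (-A) ^ m + exp (-B) ^ m := h
    _ = exp (-(m * A)) * (1 + exp (-(m * (B - A)))) := by
      rw [← exp_nat_mul, ← exp_nat_mul, mul_add, ← exp_add]
      ring_nf
    _ ≤ exp (-(m * A)) * (2 * exp (-A)) := by gcongr
    _ = 2 * exp (-((m + 1) * A)) := by
      rw [mul_left_comm, ← exp_add]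
      ring_nf
  have hlogδ := log_lt_log hδ0 hδlt
  rw [log_mul two_ne_zero (exp_pos _).ne', log_exp] at hlogδ
  rw [log_div two_ne_zero hδ0.ne']
  linarith

lemma neg_log_one_sub_two_mul_slowRate_le {ε : ℝ} (hε0 : 0 < ε) (hε1 : ε < 1) :
    -log (1 - 2 * slowRate ε) ≤ (log 2 - slowRate ε) * (fastRate ε - slowRate ε) / slowRate ε := by
  set A := slowRate ε
  have hA0 : 0 < A := slowRate_pos hε0
  have hA1 : A ≤ ε ^ 2 / 2 := slowRate_le hε0.le
  have hB : ε ^ 2 / (2 * (1 - ε)) ≤ fastRate ε := le_fastRate hε0.le hε1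
  have h1ε : 0 < 1 - ε := by linarith
  have hε2 : 0 < 1 - ε ^ 2 := by nlinarith
  have hlog : ε / (1 + ε) ≤ log 2 - A := by
    have : log (1 + ε) ≤ log 2 := log_le_log (by linarith) (by linarith)
    simp only [A, slowRate]
    linarith
  have hgap : ε ^ 3 / (2 * (1 - ε)) ≤ fastRate ε - A := by
    have : ε ^ 3 / (2 * (1 - ε)) = ε ^ 2 / (2 * (1 - ε)) - ε ^ 2 / 2 := by
      field_simp
      ring
    linarith
  calc -log (1 - 2 * A) ≤ (1 - 2 * A)⁻¹ - 1 := by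
        linarith [one_sub_inv_le_log_of_pos (by linarith : 0 < 1 - 2 * A)]
    _ ≤ (1 - ε ^ 2)⁻¹ - 1 := by gcongr; linarith
    _ = ε / (1 + ε) * (ε ^ 3 / (2 * (1 - ε))) / (ε ^ 2 / 2) := by
      field_simp
      ring
    _ ≤ (log 2 - A) * (fastRate ε - A) / A := by
      have hε' : 0 ≤ ε / (1 + ε) := by positivity
      have hε3 : 0 ≤ ε ^ 3 / (2 * (1 - ε)) := div_nonneg (by positivity) (by linarith)
      refine div_le_div₀ (mul_nonneg (hε'.trans hlog) (hε3.trans hgap)) ?_ hA0 hA1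
      exact mul_le_mul hlog hgap hε3 (hε'.trans hlog)

/-- Bounds on the minimal stopping threshold `T`:
if `T` is the least positive integer with
`(e^{ε/(1+ε)}/(1+ε))^T + (e^{-ε/(1-ε)}/(1-ε))^T ≤ δ`, then
`log(2/δ)/(log(1-ε) + ε/(1-ε)) ≤ T ≤ log(2/δ)/(log(1+ε) - ε/(1+ε))`. -/
theorem stopping_threshold_bounds
    (ε δ : ℝ) (hε : ε ∈ Set.Ioo (0:ℝ) 1) (hδ : δ ∈ Set.Ioo (0:ℝ) 1)
    (T : ℕ) (hTpos : 0 < T)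
    (hT : (Real.exp (ε / (1 + ε)) / (1 + ε)) ^ T
            + (Real.exp (-ε / (1 - ε)) / (1 - ε)) ^ T ≤ δ)
    (hTmin : ∀ T' : ℕ, 0 < T' →
      (Real.exp (ε / (1 + ε)) / (1 + ε)) ^ T'
        + (Real.exp (-ε / (1 - ε)) / (1 - ε)) ^ T' ≤ δ → T ≤ T') :
    Real.log (2 / δ) / (Real.log (1 - ε) + ε / (1 - ε)) ≤ (T : ℝ) ∧
    (T : ℝ) ≤ Real.log (2 / δ) / (Real.log (1 + ε) - ε / (1 + ε)) := by
  obtain ⟨hε0, hε1⟩ := hε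
  obtain ⟨hδ0, hδ1⟩ := hδ
  rw [exp_div_one_add_eq (by linarith), exp_neg_div_one_sub_eq hε1] at hT hTmin
  have hA0 := slowRate_pos hε0
  have hA1 := slowRate_le hε0.le
  have hAB : slowRate ε ≤ fastRate ε :=
    hA1.trans (le_trans (by gcongr; linarith) (le_fastRate hε0.le hε1))
  refine ⟨(div_le_iff₀ (hA0.trans_le hAB)).2 ?_, (le_div_iff₀ hA0).2 ?_⟩
  · exact log_two_div_le_mul_of_exp_add_exp_le hAB hT
  obtain ⟨m, rfl⟩ : ∃ m, T = m + 1 := ⟨T - 1, by omega⟩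
  have hfail : δ < exp (-slowRate ε) ^ m + exp (-fastRate ε) ^ m := by
    rcases m.eq_zero_or_pos with rfl | hm
    · norm_num
      linarith
    by_contra! h
    have := hTmin m hm h
    omega
  push_cast
  exact mul_le_log_two_div_of_lt_exp_add_exp hA0 (by nlinarith) hAB
    (neg_log_one_sub_two_mul_slowRate_le hε0 hε1) hδ0 hδ1.le hfail
end

section
/- Let V be a finite set of propositional variables and ρ : V → [0,1] a weight function, extended to literals by ρ(¬v) = 1 - ρ(v). For an assignment ν : V → Bool define ρ(ν) = ∏_{v ∈ V} (ρ(v) if ν(v) = true, else 1-ρ(v)), and for a clause C (a consistent nonempty set of literals) define ρ(C) = ∏_{a ∈ C} ρ(a). Let Φ be a finite set of clauses, let L(ν) denote the number of clauses of Φ satisfied by ν, and let μ = ∑_{ν : L(ν) ≥ 1} ρ(ν). Then ∑_{C ∈ Φ} ∑_{ν : ν satisfies C} ρ(ν)/L(ν) = μ. -/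
/-- An assignment `ν` satisfies a clause `C` (a finite set of literals, where a
literal is a pair of a variable and a polarity) if every literal of `C` is true
under `ν`. -/
def Satisfies {α : Type*} (ν : α → Bool) (C : Finset (α × Bool)) : Prop :=
  ∀ a ∈ C, ν a.1 = a.2

instance {α : Type*} (ν : α → Bool) (C : Finset (α × Bool)) :
    Decidable (Satisfies ν C) :=
  inferInstanceAs (Decidable (∀ a ∈ C, ν a.1 = a.2))

/-- The weight `ρ(ν) = ∏_{v} (ρ(v) if ν(v) else 1 - ρ(v))` of an assignment. -/
def assignWeight {α : Type*} [Fintype α] (ρ : α → ℝ) (ν : α → Bool) : ℝ :=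
  ∏ v, if ν v then ρ v else 1 - ρ v

/-- The number `L(ν)` of clauses of `Φ` satisfied by `ν`. -/
def numSat {α : Type*} (Φ : Finset (Finset (α × Bool))) (ν : α → Bool) : ℕ :=
  (Φ.filter (fun C => Satisfies ν C)).card

/-- Unbiasedness of the importance-sampling scheme:
`∑_{C ∈ Φ} ∑_{ν ⊨ C} ρ(ν)/L(ν) = μ`, where `μ = ∑_{ν : L(ν) ≥ 1} ρ(ν)`. -/
theorem importance_sampling_unbiased
    {α : Type*} [Fintype α] [DecidableEq α]
    (ρ : α → ℝ) (hρ : ∀ v, ρ v ∈ Set.Icc (0:ℝ) 1)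
    (Φ : Finset (Finset (α × Bool)))
    (hΦ : ∀ C ∈ Φ, C.Nonempty ∧ ∀ v : α, ¬((v, true) ∈ C ∧ (v, false) ∈ C)) :
    ∑ C ∈ Φ, ∑ ν ∈ Finset.univ.filter (fun ν : α → Bool => Satisfies ν C),
        assignWeight ρ ν / (numSat Φ ν : ℝ)
      = ∑ ν ∈ Finset.univ.filter (fun ν : α → Bool => 1 ≤ numSat Φ ν),
          assignWeight ρ ν := by
  classical
  simp_rw [Finset.sum_filter]
  rw [Finset.sum_comm]
  refine Finset.sum_congr rfl fun ν _ => ?_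
  have key : ∑ C ∈ Φ, (if Satisfies ν C then assignWeight ρ ν / (numSat Φ ν : ℝ) else 0)
      = (numSat Φ ν : ℝ) * (assignWeight ρ ν / (numSat Φ ν : ℝ)) := by
    rw [← Finset.sum_filter, Finset.sum_const, numSat, nsmul_eq_mul]
  rw [key]
  by_cases h : 1 ≤ numSat Φ ν
  · rw [if_pos h, mul_div_cancel₀]
    exact_mod_cast Nat.one_le_iff_ne_zero.mp h
  · rw [if_neg h]
    have : numSat Φ ν = 0 := by omega
    simp [this]
end

section
/- Let p ∈ (0,1], ε ∈ (0,1), and T a positive integer. Let X₁, X₂, … be i.i.d. Bernoulli(p) random variables and let N be the (almost surely finite) index of the T-th success, i.e., N = min{n : X₁ + ⋯ + X_n = T}. Then P(T/N < p(1-ε)) ≤ (e^{-ε/(1-ε)}/(1-ε))^T. -/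
/-!
If `T / N < p (1 - ε)`, then `N ≥ m = ⌈T / (p (1 - ε))⌉` (or there is no `T`-th success), so
the binomial count `S` of successes among the first `m` trials is at most `T`. Markov's
inequality for `s ^ S` with `s = 1 - ε` gives
`P(S ≤ T) ≤ s⁻ᵀ E[s ^ S] = (1 - ε)⁻ᵀ (1 - p ε) ^ m ≤ (1 - ε)⁻ᵀ exp (-p ε m)`,
and `p ε m ≥ ε T / (1 - ε)`.
-/

open MeasureTheory ProbabilityTheory

theorem Nat.exists_eq_of_succ_le_add_one {f : ℕ → ℕ} (hstep : ∀ n, f (n + 1) ≤ f n + 1)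
    {T n : ℕ} (h0 : f 0 ≤ T) (hn : T ≤ f n) : ∃ k ≤ n, f k = T := by
  induction n with
  | zero => exact ⟨0, le_rfl, by omega⟩
  | succ n ih =>
    by_cases hT : T ≤ f n
    · obtain ⟨k, hk, hfk⟩ := ih hT
      exact ⟨k, by omega, hfk⟩
    · exact ⟨n + 1, le_rfl, by have := hstep n; omega⟩

def successCount (b : ℕ → Bool) (n : ℕ) : ℕ :=
  ∑ i ∈ Finset.range n, if b i then 1 else 0

namespace successCount

variable (b : ℕ → Bool)

@[simp]
theorem zero : successCount b 0 = 0 := rfl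

theorem succ_le (n : ℕ) : successCount b (n + 1) ≤ successCount b n + 1 := by
  simp only [successCount, Finset.sum_range_succ]
  split <;> omega

theorem le_self (n : ℕ) : successCount b n ≤ n := by
  calc successCount b n ≤ (Finset.range n).card • 1 :=
        Finset.sum_le_card_nsmul _ _ _ fun i _ => by split <;> omega
    _ = n := by simp

/-- When there is no `T`-th success, `sInf ∅ = 0` turns `h` into `0 < q`; the conclusion still
holds because the count then stays below `T`. -/
theorem le_of_div_sInf_lt {T : ℕ} (hT : 0 < T) {q : ℝ} (hq : 0 < q)
    (h : (T : ℝ) / (sInf {n | successCount b n = T} : ℕ) < q) :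
    successCount b ⌈T / q⌉₊ ≤ T := by
  by_contra! hlt
  obtain ⟨k, hk, hbk⟩ := Nat.exists_eq_of_succ_le_add_one (succ_le b) (by simp) hlt.le
  replace hbk : k ∈ {n | successCount b n = T} := hbk
  set N := sInf {n | successCount b n = T}
  have hNk : N < ⌈T / q⌉₊ :=
    (Nat.sInf_le hbk).trans_lt (hk.lt_of_ne (by rintro rfl; exact hlt.ne' hbk))
  have hN : 0 < N := by
    have : successCount b N = T := Nat.sInf_mem ⟨k, hbk⟩
    exact Nat.pos_of_ne_zero fun h0 => by simp [h0] at this; omega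
  have hNq : (N : ℝ) * q < T := by
    have := Nat.lt_ceil.1 hNk
    rwa [lt_div_iff₀ hq] at this
  rw [div_lt_iff₀ (by exact_mod_cast hN)] at h
  linarith

end successCount

section Probability

variable {Ω : Type*} [MeasurableSpace Ω] {μ : Measure Ω} [IsProbabilityMeasure μ] {p : ℝ}

theorem mgf_bool_indicator {Y : Ω → Bool} (hY : Measurable Y) (hp : 0 ≤ p)
    (hYdist : μ {ω | Y ω = true} = ENNReal.ofReal p) (t : ℝ) :
    mgf (fun ω => if Y ω then (1 : ℝ) else 0) μ t = 1 - p + p * Real.exp t := by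
  have hA : MeasurableSet {ω | Y ω = true} := hY (measurableSet_singleton true)
  have hexp : (fun ω => Real.exp (t * if Y ω then 1 else 0))
      = fun ω => 1 + Set.indicator {ω | Y ω = true} (fun _ => Real.exp t - 1) ω := by
    funext ω
    by_cases h : Y ω <;> simp [h]
  rw [mgf, hexp, integral_add (integrable_const 1)
    ((integrable_indicator_iff hA).2 (integrableOn_const (measure_ne_top μ _) (by simp))),
    integral_const, integral_indicator_const _ hA]
  simp [measureReal_def, hYdist, hp]
  ring

variable {X : ℕ → Ω → Bool}

theorem mgf_successCount (hXmeas : ∀ i, Measurable (X i)) (hXindep : iIndepFun X μ)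
    (hp : 0 ≤ p) (hXdist : ∀ i, μ {ω | X i ω = true} = ENNReal.ofReal p)
    (m : ℕ) (t : ℝ) :
    mgf (fun ω => (successCount (X · ω) m : ℝ)) μ t = (1 - p + p * Real.exp t) ^ m := by
  set Y : ℕ → Ω → ℝ := fun i => (fun b : Bool => if b then 1 else 0) ∘ X i
  have hcount : (fun ω => (successCount (X · ω) m : ℝ)) = ∑ i ∈ Finset.range m, Y i := by
    ext ω
    simp [successCount, Y]
  have hYindep : iIndepFun Y μ := hXindep.comp _ fun _ => measurable_from_top
  rw [hcount, hYindep.mgf_sum fun i => measurable_from_top.comp (hXmeas i)]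
  exact (Finset.prod_congr rfl fun i _ => mgf_bool_indicator (hXmeas i) hp (hXdist i) t).trans
    (by simp)

theorem measure_successCount_le (hXmeas : ∀ i, Measurable (X i)) (hXindep : iIndepFun X μ)
    (hp : 0 ≤ p) (hXdist : ∀ i, μ {ω | X i ω = true} = ENNReal.ofReal p)
    {s : ℝ} (hs0 : 0 < s) (hs1 : s ≤ 1) (m T : ℕ) :
    μ {ω | (successCount (X · ω) m : ℝ) ≤ T}
      ≤ ENNReal.ofReal (s⁻¹ ^ T * (1 - p + p * s) ^ m) := by
  have hmeas : Measurable fun ω => (successCount (X · ω) m : ℝ) :=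
    measurable_from_top.comp <| Finset.measurable_sum (f := fun i ω => if X i ω then 1 else 0) _
      fun i _ => (measurable_from_top (f := fun b : Bool => if b then 1 else 0)).comp (hXmeas i)
  have hint : Integrable (fun ω => Real.exp (Real.log s * successCount (X · ω) m)) μ :=
    integrable_exp_mul_of_mem_Icc (a := 0) (b := m) hmeas.aemeasurable
      (ae_of_all _ fun ω => ⟨Nat.cast_nonneg _, Nat.cast_le.2 (successCount.le_self _ m)⟩)
  have hchernoff := measure_le_le_exp_mul_mgf (T : ℝ) (Real.log_nonpos hs0.le hs1) hint
  rw [mgf_successCount hXmeas hXindep hp hXdist, Real.exp_log hs0, ← Real.log_inv,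
    ← Real.rpow_def_of_pos (inv_pos.2 hs0), Real.rpow_natCast] at hchernoff
  exact (ENNReal.ofReal_toReal (measure_ne_top μ _)).symm.trans_le
    (ENNReal.ofReal_le_ofReal hchernoff)

end Probability

theorem one_sub_mul_pow_le_exp {p ε : ℝ} (hp0 : 0 < p) (hp1 : p ≤ 1) (hε0 : 0 ≤ ε)
    (hε1 : ε < 1) {T m : ℕ} (hm : T / (p * (1 - ε)) ≤ m) :
    (1 - p * ε) ^ m ≤ Real.exp (-ε / (1 - ε)) ^ T := by
  have h1ε : 0 < 1 - ε := by linarith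
  have hexponent : ε / (1 - ε) * T ≤ p * ε * m := calc
    ε / (1 - ε) * T = p * ε * (T / (p * (1 - ε))) := by field_simp
    _ ≤ p * ε * m := by gcongr
  calc (1 - p * ε) ^ m ≤ Real.exp (-(p * ε)) ^ m :=
        pow_le_pow_left₀ (by nlinarith) (Real.one_sub_le_exp_neg _) m
    _ = Real.exp (-(p * ε) * m) := by rw [← Real.exp_nat_mul, mul_comm]
    _ ≤ Real.exp (-ε / (1 - ε) * T) := Real.exp_le_exp.2 (by rw [neg_div]; linarith)
    _ = Real.exp (-ε / (1 - ε)) ^ T := by rw [mul_comm, Real.exp_nat_mul]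

/-- Lower-tail bound for the negative-binomial estimator: if `X₁, X₂, …` are
i.i.d. Bernoulli(p) and `N` is the index of the `T`-th success, then
`P(T/N < p(1-ε)) ≤ (e^{-ε/(1-ε)}/(1-ε))^T`. -/
theorem negBinomial_estimator_lower_tail
    {Ω : Type*} [MeasurableSpace Ω] (μ : Measure Ω) [IsProbabilityMeasure μ]
    (p : ℝ) (hp : p ∈ Set.Ioc (0:ℝ) 1) (ε : ℝ) (hε : ε ∈ Set.Ioo (0:ℝ) 1)
    (T : ℕ) (hT : 0 < T)
    (X : ℕ → Ω → Bool) (hXmeas : ∀ i, Measurable (X i))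
    (hXindep : iIndepFun X μ)
    (hXdist : ∀ i, μ {ω | X i ω = true} = ENNReal.ofReal p)
    (N : Ω → ℕ)
    (hN : ∀ ω, N ω = sInf {n : ℕ | ∑ i ∈ Finset.range n, (if X i ω then 1 else 0) = T}) :
    μ {ω | (T : ℝ) / (N ω : ℝ) < p * (1 - ε)}
      ≤ ENNReal.ofReal ((Real.exp (-ε / (1 - ε)) / (1 - ε)) ^ T) := by
  obtain ⟨hp0, hp1⟩ := hp
  obtain ⟨hε0, hε1⟩ := hε
  have h1ε : 0 < 1 - ε := by linarith
  set m := ⌈T / (p * (1 - ε))⌉₊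
  have hevent : {ω | (T : ℝ) / (N ω : ℝ) < p * (1 - ε)}
      ⊆ {ω | (successCount (X · ω) m : ℝ) ≤ T} := fun ω hω => by
    rw [Set.mem_ofPred_eq, hN ω] at hω
    exact_mod_cast successCount.le_of_div_sInf_lt _ hT (mul_pos hp0 h1ε) hω
  calc μ {ω | (T : ℝ) / (N ω : ℝ) < p * (1 - ε)}
      ≤ μ {ω | (successCount (X · ω) m : ℝ) ≤ T} := measure_mono hevent
    _ ≤ ENNReal.ofReal ((1 - ε)⁻¹ ^ T * (1 - p + p * (1 - ε)) ^ m) :=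
        measure_successCount_le hXmeas hXindep hp0.le hXdist h1ε (by linarith) m T
    _ ≤ ENNReal.ofReal ((Real.exp (-ε / (1 - ε)) / (1 - ε)) ^ T) := by
      refine ENNReal.ofReal_le_ofReal ?_
      rw [div_eq_mul_inv, mul_pow, mul_comm, show 1 - p + p * (1 - ε) = 1 - p * ε by ring]
      gcongr
      exact one_sub_mul_pow_le_exp hp0 hp1 hε0.le hε1 (Nat.le_ceil _)
end

section
/- Let p ∈ (0,1], ε ∈ (0,1), and T a positive integer. Let X₁, X₂, … be i.i.d. Bernoulli(p) random variables and let N be the (almost surely finite) index of the T-th success, i.e., N = min{n : X₁ + ⋯ + X_n = T}. Then P(T/N > p(1+ε)) ≤ (e^{ε/(1+ε)}/(1+ε))^T. -/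
/-!
If `T / N > p (1 + ε)` then `N ≤ m := ⌊T / (p (1 + ε))⌋`, so the first `m` trials already
contain `T` successes. The Chernoff bound at `t = log (1 + ε)` bounds this binomial tail by
`(1 + ε)⁻ᵀ (1 + ε p)ᵐ ≤ (1 + ε)⁻ᵀ e^{ε p m} ≤ (e^{ε/(1+ε)} / (1 + ε))ᵀ`.
-/

open MeasureTheory ProbabilityTheory Finset Real

lemma exp_mul_ite_one_zero_eq_indicator_add_one {Ω : Type*} (B : Ω → Bool) (t : ℝ) :
    (fun ω => exp (t * if B ω then 1 else 0)) =
      fun ω => {ω | B ω = true}.indicator (fun _ => exp t - 1) ω + 1 := by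
  funext ω
  by_cases h : B ω <;> simp [h]

section BooleanTrials

variable {Ω ι : Type*} [MeasurableSpace Ω] {μ : Measure Ω} [IsProbabilityMeasure μ]

lemma integrable_exp_mul_ite_one_zero {B : Ω → Bool} (hB : Measurable B) (t : ℝ) :
    Integrable (fun ω => exp (t * if B ω then 1 else 0)) μ := by
  rw [exp_mul_ite_one_zero_eq_indicator_add_one]
  exact ((integrable_const _).indicator (hB (measurableSet_singleton true))).add
    (integrable_const 1)

lemma mgf_ite_one_zero {B : Ω → Bool} (hB : Measurable B) (t : ℝ) :
    mgf (fun ω => if B ω then (1 : ℝ) else 0) μ t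
      = 1 + (exp t - 1) * μ.real {ω | B ω = true} := by
  have hs : MeasurableSet {ω | B ω = true} := hB (measurableSet_singleton true)
  rw [mgf, exp_mul_ite_one_zero_eq_indicator_add_one,
    integral_add ((integrable_const _).indicator hs) (integrable_const 1),
    integral_indicator_const _ hs]
  simp only [integral_const, probReal_univ, smul_eq_mul]
  ring

lemma measureReal_le_sum_ite_one_zero_le {X : ι → Ω → Bool} (hX : ∀ i, Measurable (X i))
    (hindep : iIndepFun X μ) {q : ℝ} (hq : ∀ i, μ.real {ω | X i ω = true} = q)
    (s : Finset ι) (a : ℝ) {t : ℝ} (ht : 0 ≤ t) :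
    μ.real {ω | a ≤ ∑ i ∈ s, if X i ω then (1 : ℝ) else 0}
      ≤ exp (-t * a) * (1 + (exp t - 1) * q) ^ #s := by
  set Y : ι → Ω → ℝ := fun i ω => if X i ω then 1 else 0
  have hY : ∀ i, Measurable (Y i) := fun i =>
    (measurable_of_countable fun b : Bool => if b then (1 : ℝ) else 0).comp (hX i)
  have hYindep : iIndepFun Y μ :=
    hindep.comp (fun _ b => if b then (1 : ℝ) else 0) fun _ => measurable_of_countable _
  have hint := hYindep.integrable_exp_mul_sum (t := t) (s := s) hY
    fun i _ => integrable_exp_mul_ite_one_zero (hX i) t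
  have hchernoff := measure_ge_le_exp_mul_mgf a ht hint
  rw [hYindep.mgf_sum hY, prod_congr rfl fun i _ => (mgf_ite_one_zero (hX i) t).trans
    (by rw [hq i]), prod_const] at hchernoff
  simpa [Y, Finset.sum_apply] using hchernoff

end BooleanTrials

lemma le_sum_range_of_sInf_le {b : ℕ → ℕ} {T m : ℕ}
    (h0 : sInf {n | ∑ i ∈ range n, b i = T} ≠ 0)
    (hm : sInf {n | ∑ i ∈ range n, b i = T} ≤ m) :
    T ≤ ∑ i ∈ range m, b i := by
  have hne : {n | ∑ i ∈ range n, b i = T}.Nonempty :=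
    Set.nonempty_iff_ne_empty.2 fun h => h0 (by rw [h, Nat.sInf_empty])
  calc T = ∑ i ∈ range (sInf {n | ∑ i ∈ range n, b i = T}), b i := (Nat.sInf_mem hne).symm
    _ ≤ ∑ i ∈ range m, b i := sum_le_sum_of_subset (range_subset_range.2 hm)

lemma ne_zero_and_le_floor_div_of_lt_div {c x : ℝ} {n : ℕ} (hc : 0 < c) (h : c < x / n) :
    n ≠ 0 ∧ n ≤ ⌊x / c⌋₊ := by
  have hn : n ≠ 0 := by
    rintro rfl
    simp only [Nat.cast_zero, div_zero] at h
    linarith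
  refine ⟨hn, Nat.le_floor ?_⟩
  rw [le_div_iff₀ hc, mul_comm]
  exact (lt_div_iff₀ (by positivity)).1 h |>.le

lemma exp_neg_log_one_add_mul_one_add_mul_pow_le {p ε : ℝ} {m T : ℕ}
    (hp : 0 ≤ p) (hε : 0 ≤ ε) (hm : (m : ℝ) * (p * (1 + ε)) ≤ T) :
    exp (-log (1 + ε) * T) * (1 + ε * p) ^ m ≤ (exp (ε / (1 + ε)) / (1 + ε)) ^ T := by
  have hpow : (1 + ε * p) ^ m ≤ exp (ε * p * m) := by
    calc (1 + ε * p) ^ m ≤ exp (ε * p) ^ m := by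
          gcongr
          linarith [add_one_le_exp (ε * p)]
      _ = exp (ε * p * m) := by rw [← exp_nat_mul, mul_comm]
  have hexponent : ε * p * m ≤ T * (ε / (1 + ε)) := by
    rw [mul_div_assoc', le_div_iff₀ (by positivity)]
    nlinarith
  calc exp (-log (1 + ε) * T) * (1 + ε * p) ^ m
      ≤ exp (-log (1 + ε) * T) * exp (T * (ε / (1 + ε))) := by
        gcongr
        exact hpow.trans (exp_le_exp.2 hexponent)
    _ = exp (T * (ε / (1 + ε))) / (1 + ε) ^ T := by
      rw [neg_mul, exp_neg, mul_comm (log _), exp_nat_mul, exp_log (by positivity)]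
      ring
    _ = (exp (ε / (1 + ε)) / (1 + ε)) ^ T := by rw [div_pow, exp_nat_mul]

theorem negBinomial_estimator_upper_tail_general
    {Ω : Type*} [MeasurableSpace Ω] (μ : Measure Ω) [IsProbabilityMeasure μ]
    (p : ℝ) (hp : p ∈ Set.Ioc (0:ℝ) 1) (ε : ℝ) (hε : ε ∈ Set.Ioo (0:ℝ) 1)
    (T : ℕ)
    (X : ℕ → Ω → Bool) (hXmeas : ∀ i, Measurable (X i))
    (hXindep : iIndepFun X μ)
    (hXdist : ∀ i, μ {ω | X i ω = true} = ENNReal.ofReal p)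
    (N : Ω → ℕ)
    (hN : ∀ ω, N ω = sInf {n : ℕ | ∑ i ∈ Finset.range n, (if X i ω then 1 else 0) = T}) :
    μ {ω | p * (1 + ε) < (T : ℝ) / (N ω : ℝ)}
      ≤ ENNReal.ofReal ((Real.exp (ε / (1 + ε)) / (1 + ε)) ^ T) := by
  have hc : 0 < p * (1 + ε) := mul_pos hp.1 (by linarith [hε.1])
  set m := ⌊(T : ℝ) / (p * (1 + ε))⌋₊
  have hsub : {ω | p * (1 + ε) < (T : ℝ) / (N ω : ℝ)}
      ⊆ {ω | (T : ℝ) ≤ ∑ i ∈ range m, if X i ω then (1 : ℝ) else 0} := by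
    intro ω hω
    obtain ⟨hN0, hNm⟩ := ne_zero_and_le_floor_div_of_lt_div hc hω
    rw [hN] at hN0 hNm
    simpa using (Nat.cast_le (α := ℝ)).2 (le_sum_range_of_sInf_le hN0 hNm)
  have hq : ∀ i, μ.real {ω | X i ω = true} = p := fun i => by
    rw [measureReal_def, hXdist, ENNReal.toReal_ofReal hp.1.le]
  have htail := measureReal_le_sum_ite_one_zero_le hXmeas hXindep hq (range m) T
    (log_nonneg (by linarith [hε.1] : (1 : ℝ) ≤ 1 + ε))
  rw [exp_log (by linarith [hε.1]), add_sub_cancel_left, card_range] at htail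
  have hm : (m : ℝ) * (p * (1 + ε)) ≤ T := (le_div_iff₀ hc).1 (Nat.floor_le (by positivity))
  calc μ {ω | p * (1 + ε) < (T : ℝ) / (N ω : ℝ)}
      ≤ μ {ω | (T : ℝ) ≤ ∑ i ∈ range m, if X i ω then (1 : ℝ) else 0} := measure_mono hsub
    _ = ENNReal.ofReal (μ.real _) := (ofReal_measureReal (measure_ne_top _ _)).symm
    _ ≤ ENNReal.ofReal ((Real.exp (ε / (1 + ε)) / (1 + ε)) ^ T) := ENNReal.ofReal_le_ofReal
      (htail.trans (exp_neg_log_one_add_mul_one_add_mul_pow_le hp.1.le hε.1.le hm))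

/-- Upper-tail bound for the negative-binomial estimator: if `X₁, X₂, …` are
i.i.d. Bernoulli(p) and `N` is the index of the `T`-th success, then
`P(T/N > p(1+ε)) ≤ (e^{ε/(1+ε)}/(1+ε))^T`. -/
theorem negBinomial_estimator_upper_tail
    {Ω : Type*} [MeasurableSpace Ω] (μ : Measure Ω) [IsProbabilityMeasure μ]
    (p : ℝ) (hp : p ∈ Set.Ioc (0:ℝ) 1) (ε : ℝ) (hε : ε ∈ Set.Ioo (0:ℝ) 1)
    (T : ℕ) (hT : 0 < T)
    (X : ℕ → Ω → Bool) (hXmeas : ∀ i, Measurable (X i))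
    (hXindep : iIndepFun X μ)
    (hXdist : ∀ i, μ {ω | X i ω = true} = ENNReal.ofReal p)
    (N : Ω → ℕ)
    (hN : ∀ ω, N ω = sInf {n : ℕ | ∑ i ∈ Finset.range n, (if X i ω then 1 else 0) = T}) :
    μ {ω | p * (1 + ε) < (T : ℝ) / (N ω : ℝ)}
      ≤ ENNReal.ofReal ((Real.exp (ε / (1 + ε)) / (1 + ε)) ^ T) :=
  negBinomial_estimator_upper_tail_general μ p hp ε hε T X hXmeas hXindep hXdist N hN
end

section
/- Let H(x) = -x log₂(x) - (1-x) log₂(1-x) denote the binary entropy function, and let log denote the natural logarithm. For every x ∈ (0, 1/100), H(1-x) + 2(1-x) log(1/x) ≤ 2 log(1/x). -/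
/-- The binary entropy function `H(x) = -x log₂ x - (1-x) log₂ (1-x)`. -/
noncomputable def binH (x : ℝ) : ℝ := -(x * Real.logb 2 x) - (1 - x) * Real.logb 2 (1 - x)

/-!
Since `H(1 - x) = H(x)` and `-(1 - x) log (1 - x) ≤ x`, the left-hand side exceeds
`2 (1 - x) log (1/x)` by at most `x (log (1/x) + 1) / log 2`, and this is at most
`2 x log (1/x)` as soon as `(2 log 2 - 1) log (1/x) ≥ 1`, which holds for `1/x ≥ 64`.
-/

open Real

lemma binH_eq_binEntropy_div_log_two (x : ℝ) : binH x = binEntropy x / log 2 := by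
  simp only [binH, logb, binEntropy, log_inv]
  ring

lemma binEntropy_le_mul_log_inv_add_self {p : ℝ} (hp : p < 1) :
    binEntropy p ≤ p * log p⁻¹ + p := by
  have hq : 0 < 1 - p := by linarith
  have hlog : log (1 - p)⁻¹ ≤ (1 - p)⁻¹ - 1 := log_le_sub_one_of_pos (inv_pos.mpr hq)
  calc binEntropy p = p * log p⁻¹ + (1 - p) * log (1 - p)⁻¹ := rfl
    _ ≤ p * log p⁻¹ + (1 - p) * ((1 - p)⁻¹ - 1) := by gcongr
    _ = p * log p⁻¹ + p := by field_simp; ring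

/-- For every `x ∈ (0, 1/100)`, `H(1-x) + 2(1-x) log(1/x) ≤ 2 log(1/x)`
(natural logarithm). -/
theorem entropy_endpoint_bound (x : ℝ) (hx : x ∈ Set.Ioo (0:ℝ) (1/100)) :
    binH (1 - x) + 2 * (1 - x) * Real.log (1 / x) ≤ 2 * Real.log (1 / x) := by
  obtain ⟨hx0, hx1⟩ := hx
  have hlog2 : 0.6931471803 < log 2 := log_two_gt_d9
  have hL : 6 * log 2 ≤ log (1 / x) := by
    rw [← log_rpow two_pos]
    exact log_le_log (by positivity) (by rw [le_div_iff₀ hx0]; norm_num; linarith)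
  have hH : binH (1 - x) ≤ x * (log (1 / x) + 1) / log 2 := by
    rw [binH_eq_binEntropy_div_log_two, binEntropy_one_sub, mul_add, mul_one, one_div]
    gcongr
    exact binEntropy_le_mul_log_inv_add_self (by linarith)
  have hL_add_one : log (1 / x) + 1 ≤ 2 * log 2 * log (1 / x) := by nlinarith
  have hslack : x * (log (1 / x) + 1) / log 2 ≤ 2 * x * log (1 / x) := by
    rw [div_le_iff₀ (by linarith)]
    nlinarith [mul_le_mul_of_nonneg_left hL_add_one hx0.le]
  linarith
end
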